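/- arXiv:1302.4059 — 2 statements merged into one kernel-verified Lean document; each statement's English description precedes it below -/
import Mathlib

section
/- Let α > 2, β ≥ 1, N ≥ 1 and P = βN, and let 0 < λ < 1. Suppose x satisfies √2·x ≤ 1-λ, and let d be a positive integer with d ≥ (8·2^{α/2}/(N·λ·(α-2)))^{1/(α-2)}. Then e_d := ∑_{i=d+1}^∞ i^{1-α} ≤ N·λ/(8·2^{α/2}), and consequently β·N/(√2 x)^α ≥ β·(N + (8/x^α)·e_d). -/
/-- With `P = βN`, `√2·x ≤ 1-λ` and `d ≥ (8·2^{α/2}/(Nλ(α-2)))^{1/(α-2)}`, the tail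
`e_d = ∑_{i=d+1}^∞ i^{1-α}` satisfies `e_d ≤ Nλ/(8·2^{α/2})`, and consequently
`βN/(√2 x)^α ≥ β(N + (8/x^α) e_d)`. -/
theorem sinr_tail_inequality (α β N P lam x : ℝ) (d : ℕ)
    (hα : 2 < α) (hβ : 1 ≤ β) (hN : 1 ≤ N) (hP : P = β * N)
    (hlam0 : 0 < lam) (hlam1 : lam < 1)
    (hx0 : 0 < x) (hx : Real.sqrt 2 * x ≤ 1 - lam)
    (hd0 : 0 < d)
    (hd : (d : ℝ) ≥ (8 * 2 ^ (α / 2) / (N * lam * (α - 2))) ^ (1 / (α - 2))) :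
    (∑' i : ℕ, ((i + d + 1 : ℕ) : ℝ) ^ (1 - α)) ≤ N * lam / (8 * 2 ^ (α / 2)) ∧
    β * N / (Real.sqrt 2 * x) ^ α
      ≥ β * (N + (8 / x ^ α) * ∑' i : ℕ, ((i + d + 1 : ℕ) : ℝ) ^ (1 - α)) := by
  have hα2 : (0:ℝ) < α - 2 := by linarith
  have hCpos : (0:ℝ) < 8 * 2 ^ (α / 2) := by positivity
  have hdpos : (0:ℝ) < d := by exact_mod_cast hd0
  have hd1 : (1:ℝ) ≤ d := by exact_mod_cast hd0
  have hBpos : (0:ℝ) < N * lam * (α - 2) := by positivity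
  have hD : (0:ℝ) < (d:ℝ) ^ (α - 2) := Real.rpow_pos_of_pos hdpos _
  -- Part 1: the tail bound
  have htail : (∑' i : ℕ, ((i + d + 1 : ℕ) : ℝ) ^ (1 - α)) ≤ (d:ℝ) ^ (2 - α) / (α - 2) := by
    apply Real.tsum_le_of_sum_range_le (fun i => Real.rpow_nonneg (by positivity) _)
    intro n
    have hanti : AntitoneOn (fun t : ℝ => t ^ (1 - α)) (Set.Icc (d:ℝ) ((d:ℝ) + n)) := by
      intro a ha b hb hab
      exact Real.rpow_le_rpow_of_nonpos (lt_of_lt_of_le hdpos ha.1) hab (by linarith)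
    have hint := hanti.sum_le_integral
    have hsum_eq : ∀ i ∈ Finset.range n,
        ((i + d + 1 : ℕ) : ℝ) ^ (1 - α) = (fun t : ℝ => t ^ (1 - α)) ((d:ℝ) + ((i:ℕ) + 1 : ℕ)) := by
      intro i _
      push_cast
      ring_nf
    rw [Finset.sum_congr rfl hsum_eq]
    refine hint.trans ?_
    have hne : (1 - α) ≠ -1 := by intro h; linarith [h]
    have h0 : (0:ℝ) ∉ Set.uIcc (d:ℝ) ((d:ℝ) + n) := by
      rw [Set.uIcc_of_le (le_add_of_nonneg_right (Nat.cast_nonneg n))]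
      intro h
      have := (Set.mem_Icc.mp h).1
      linarith
    rw [integral_rpow (Or.inr ⟨hne, h0⟩)]
    have heq : (1 - α + 1) = -(α - 2) := by ring
    rw [heq, Real.rpow_neg (by positivity : (0:ℝ) ≤ (d:ℝ) + n), Real.rpow_neg hdpos.le]
    have hrw : ((((d:ℝ) + n) ^ (α - 2))⁻¹ - (((d:ℝ)) ^ (α - 2))⁻¹) / (-(α - 2))
        = ((((d:ℝ)) ^ (α - 2))⁻¹ - (((d:ℝ) + n) ^ (α - 2))⁻¹) / (α - 2) := by
      rw [div_neg, ← neg_div, neg_sub]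
    have hd2 : ((d:ℝ)) ^ (2 - α) = (((d:ℝ)) ^ (α - 2))⁻¹ := by
      rw [show (2:ℝ) - α = -(α - 2) by ring, Real.rpow_neg hdpos.le]
    rw [hrw, hd2]
    have hnum : (((d:ℝ)) ^ (α - 2))⁻¹ - (((d:ℝ) + n) ^ (α - 2))⁻¹ ≤ (((d:ℝ)) ^ (α - 2))⁻¹ := by
      have : (0:ℝ) ≤ (((d:ℝ) + n) ^ (α - 2))⁻¹ := by positivity
      linarith
    exact div_le_div_of_nonneg_right hnum hα2.le
  -- d^(2-α)/(α-2) ≤ Nλ / C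
  have hdC : (d:ℝ) ^ (2 - α) / (α - 2) ≤ N * lam / (8 * 2 ^ (α / 2)) := by
    have h1 : 8 * 2 ^ (α / 2) / (N * lam * (α - 2)) ≤ (d:ℝ) ^ (α - 2) := by
      have := Real.rpow_le_rpow (Real.rpow_nonneg (by positivity) _) hd hα2.le
      rwa [← Real.rpow_mul (by positivity), one_div_mul_cancel hα2.ne', Real.rpow_one] at this
    have h2 : 8 * 2 ^ (α / 2) ≤ (d:ℝ) ^ (α - 2) * (N * lam * (α - 2)) :=
      (div_le_iff₀ hBpos).mp h1
    have heq : (2 - α) = -(α - 2) := by ring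
    rw [heq, Real.rpow_neg hdpos.le, div_le_div_iff₀ hα2 hCpos]
    have h3 : ((d:ℝ) ^ (α - 2))⁻¹ * ((d:ℝ) ^ (α - 2)) = 1 := inv_mul_cancel₀ hD.ne'
    nlinarith [hD]
  have hpart1 := htail.trans hdC
  refine ⟨hpart1, ?_⟩
  -- Part 2
  set t := Real.sqrt 2 * x with ht
  have ht0 : 0 < t := by
    have : (0:ℝ) < Real.sqrt 2 := Real.sqrt_pos.mpr (by norm_num)
    positivity
  have ht1 : t ≤ 1 - lam := hx
  have htαpos : 0 < t ^ α := Real.rpow_pos_of_pos ht0 _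
  have hxα : 0 < x ^ α := Real.rpow_pos_of_pos hx0 _
  have htα : t ^ α ≤ 1 - lam := by
    have h := Real.rpow_le_rpow_of_exponent_ge ht0 (by linarith) (by linarith : (1:ℝ) ≤ α)
    rw [Real.rpow_one] at h
    linarith
  have hkey : t ^ α = 2 ^ (α / 2) * x ^ α := by
    rw [ht, Real.mul_rpow (Real.sqrt_nonneg 2) hx0.le, Real.sqrt_eq_rpow,
      ← Real.rpow_mul (by norm_num), show (1:ℝ) / 2 * α = α / 2 by ring]
  have he0 : 0 ≤ ∑' i : ℕ, ((i + d + 1 : ℕ) : ℝ) ^ (1 - α) :=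
    tsum_nonneg fun i => Real.rpow_nonneg (by positivity) _
  have h8 : (8 / x ^ α) * ∑' i : ℕ, ((i + d + 1 : ℕ) : ℝ) ^ (1 - α) ≤ N * lam / t ^ α := by
    calc (8 / x ^ α) * ∑' i : ℕ, ((i + d + 1 : ℕ) : ℝ) ^ (1 - α)
        ≤ (8 / x ^ α) * (N * lam / (8 * 2 ^ (α / 2))) := by
          apply mul_le_mul_of_nonneg_left hpart1 (by positivity)
      _ = N * lam / t ^ α := by
          rw [hkey]; field_simp
  have hfin : N + N * lam / t ^ α ≤ N / t ^ α := by
    rw [le_div_iff₀ htαpos, add_mul, div_mul_cancel₀ _ htαpos.ne']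
    nlinarith [mul_le_mul_of_nonneg_left htα (by linarith : (0:ℝ) ≤ N)]
  calc β * (N + (8 / x ^ α) * ∑' i : ℕ, ((i + d + 1 : ℕ) : ℝ) ^ (1 - α))
      ≤ β * (N + N * lam / t ^ α) := by
        apply mul_le_mul_of_nonneg_left (by linarith) (by linarith)
    _ ≤ β * (N / t ^ α) := mul_le_mul_of_nonneg_left hfin (by linarith)
    _ = β * N / t ^ α := by ring
end

section
/- A family S = (S_1, …, S_s) of subsets of [N] is (N,k)-strongly-selective if for every nonempty Z ⊆ [N] with |Z| ≤ k and every z ∈ Z there is an index i with S_i ∩ Z = {z}. For every 2 ≤ k ≤ N there exists an (N,k)-strongly-selective family of size O(k² log N); more precisely, of size at most C·k²·log N for some absolute constant C. -/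
/-- A family of subsets of `Fin N` is `(N,k)`-strongly-selective if every nonempty
subset `Z` of size at most `k` and every `z ∈ Z` admit a member of the family whose
intersection with `Z` is exactly `{z}`. -/
def IsStronglySelective (N k : ℕ) {s : ℕ} (S : Fin s → Finset (Fin N)) : Prop :=
  ∀ Z : Finset (Fin N), Z.Nonempty → Z.card ≤ k → ∀ z ∈ Z, ∃ i : Fin s, S i ∩ Z = {z}

/-!
Take `s` colourings `ω i : Fin N → Fin k` and let `S i` be the colour class of `0`. The family
is strongly selective as soon as every pair `(Y, z)` with `#Y = k - 1`, `z ∉ Y` is isolated by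
some `ω i`, i.e. `ω i z = 0` and `ω i ≠ 0` on `Y`. A uniformly random colouring isolates a given
pair with probability `k⁻¹ (1 - k⁻¹) ^ (k - 1) ≥ 1 / (e k)`, and there are at most `N ^ k` pairs,
so by the union bound `s = ⌈3 k² log N⌉ > e k² log N` random colourings isolate all of them with
positive probability. The probabilities are written as counts.
-/

open Finset Fintype Real

theorem exists_forall_exists_mem_of_card_mul_one_sub_pow_lt_one {α ι : Type*} [Fintype α]
    [Nonempty α] (C : Finset ι) (G : ι → Finset α) {p : ℝ} (hG : ∀ j ∈ C, p * card α ≤ #(G j))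
    {s : ℕ} (hC : #C * (1 - p) ^ s < 1) : ∃ ω : Fin s → α, ∀ j ∈ C, ∃ i, ω i ∈ G j := by
  classical
  let bad := C.biUnion fun j => piFinset fun _ : Fin s => (G j)ᶜ
  have hbad : (#bad : ℝ) < card (Fin s → α) := calc
    (#bad : ℝ) ≤ ∑ j ∈ C, (#(G j)ᶜ : ℝ) ^ s := by
      exact_mod_cast card_biUnion_le.trans_eq (by simp [card_piFinset])
    _ ≤ ∑ j ∈ C, ((1 - p) * card α) ^ s := by
      gcongr with j hj
      rw [card_compl, Nat.cast_sub (card_le_univ _)]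
      linarith [hG j hj]
    _ = #C * (1 - p) ^ s * card α ^ s := by rw [sum_const, nsmul_eq_mul, mul_pow, mul_assoc]
    _ < card α ^ s := mul_lt_of_lt_one_left (by positivity) hC
    _ = card (Fin s → α) := by simp
  obtain ⟨ω, hω⟩ : ∃ ω, ω ∉ bad := by
    by_contra! h
    exact hbad.not_ge (by rw [eq_univ_of_forall h, card_univ])
  refine ⟨ω, fun j hj => ?_⟩
  by_contra! h
  exact hω (mem_biUnion.2 ⟨j, hj, mem_piFinset.2 fun i => mem_compl.2 (h i)⟩)

section Colorings

variable {V β : Type*} [Fintype V] [DecidableEq V] [Fintype β] [DecidableEq β]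

def isolatingColorings (c : β) (z : V) (Y : Finset V) : Finset (V → β) :=
  {f | f z = c ∧ ∀ y ∈ Y, f y ≠ c}

@[simp]
theorem mem_isolatingColorings {c : β} {z : V} {Y : Finset V} {f : V → β} :
    f ∈ isolatingColorings c z Y ↔ f z = c ∧ ∀ y ∈ Y, f y ≠ c := by
  simp [isolatingColorings]

theorem card_isolatingColorings (c : β) {z : V} {Y : Finset V} (hz : z ∉ Y) :
    (#(isolatingColorings c z Y) : ℝ) =
      (card β : ℝ)⁻¹ * (1 - (card β : ℝ)⁻¹) ^ #Y * card β ^ card V := by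
  let t : V → Finset β := fun x => if x = z then {c} else if x ∈ Y then {c}ᶜ else univ
  have ht : isolatingColorings c z Y = piFinset t := by
    ext f
    simp only [mem_isolatingColorings, mem_piFinset, t]
    constructor
    · rintro ⟨hfz, hfY⟩ x
      split_ifs with hxz hxY
      · simp [hxz, hfz]
      · simpa using hfY x hxY
      · exact mem_univ _
    · intro h
      refine ⟨by simpa using h z, fun y hy => ?_⟩
      simpa [hy, ne_of_mem_of_not_mem hy hz] using h y
  have hzY : insert z Y ⊆ univ := subset_univ _
  have hcard : ∏ x, #(t x) = (card β - 1) ^ #Y * card β ^ (card V - (#Y + 1)) := by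
    rw [← prod_sdiff hzY, prod_insert hz,
      Finset.prod_congr rfl (g := fun _ => card β) fun x hx => ?_, prod_const,
      Finset.prod_congr rfl (g := fun _ => card β - 1) fun x hx => ?_, prod_const,
      card_sdiff_of_subset hzY, card_univ, card_insert_of_notMem hz]
    · simp [t, mul_comm]
    · simp [t, ne_of_mem_of_not_mem hx hz, hx, card_compl]
    · obtain ⟨hxz, hxY⟩ : x ≠ z ∧ x ∉ Y := by simpa using hx
      simp [t, hxz, hxY]
  have hβ : (card β : ℝ) ≠ 0 := by exact_mod_cast (card_pos_iff.2 ⟨c⟩).ne'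
  have hYV : #Y + 1 ≤ card V := by simpa [card_insert_of_notMem hz] using card_le_univ (insert z Y)
  rw [ht, card_piFinset, hcard]
  push_cast [Nat.cast_sub (card_pos_iff.2 ⟨c⟩ : 1 ≤ card β)]
  obtain ⟨m, hm⟩ := Nat.exists_eq_add_of_le hYV
  rw [hm, Nat.add_sub_cancel_left, pow_add, pow_succ, inv_eq_one_div, one_sub_div hβ, div_pow]
  field_simp

end Colorings

theorem exp_neg_one_le_one_sub_inv_pow {k : ℕ} (hk : 1 ≤ k) :
    exp (-1) ≤ (1 - (k : ℝ)⁻¹) ^ (k - 1) := by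
  obtain ⟨n, rfl⟩ := Nat.exists_eq_add_of_le' hk
  have hprod : (1 + (n : ℝ)⁻¹) ^ n * (1 - ((n + 1 : ℕ) : ℝ)⁻¹) ^ n = 1 := by
    rcases n.eq_zero_or_pos with rfl | hn
    · simp
    rw [← mul_pow]
    convert one_pow n using 2
    push_cast
    field_simp
    ring
  rw [Nat.add_sub_cancel, exp_neg, eq_inv_of_mul_eq_one_right hprod]
  exact inv_anti₀ (by positivity) one_add_inv_pow_le_exp

theorem mul_one_sub_inv_mul_one_sub_inv_pow_pow_lt_one {N k s : ℕ} {M : ℝ} (hk : 1 ≤ k)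
    (hN : 2 ≤ N) (hM : M ≤ (N : ℝ) ^ k) (hs : 3 * (k : ℝ) ^ 2 * log N ≤ s) :
    M * (1 - (k : ℝ)⁻¹ * (1 - (k : ℝ)⁻¹) ^ (k - 1)) ^ s < 1 := by
  set p := (k : ℝ)⁻¹ * (1 - (k : ℝ)⁻¹) ^ (k - 1)
  have hlogN : 0 < log N := log_pos (by exact_mod_cast hN)
  have hk0 : (0 : ℝ) < k := by exact_mod_cast hk
  have hkinv : (k : ℝ)⁻¹ ≤ 1 := inv_le_one_of_one_le₀ (by exact_mod_cast hk)
  have hp1 : p ≤ 1 := mul_le_one₀ hkinv (by positivity)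
    (pow_le_one₀ (by linarith) (by linarith [inv_pos.2 hk0]))
  have hp : (k : ℝ)⁻¹ * exp (-1) ≤ p :=
    mul_le_mul_of_nonneg_left (exp_neg_one_le_one_sub_inv_pow hk) (by positivity)
  have hps : k * log N < p * s := calc
    k * log N < 3 * k * log N / exp 1 := by
      rw [lt_div_iff₀ (exp_pos 1)]
      nlinarith [exp_one_lt_d9, mul_pos hk0 hlogN]
    _ = ((k : ℝ)⁻¹ * exp (-1)) * (3 * k ^ 2 * log N) := by
      rw [exp_neg]; field_simp
    _ ≤ p * s := mul_le_mul hp hs (by positivity) (hp.trans' (by positivity))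
  have hNk : (N : ℝ) ^ k = exp (k * log N) := by
    rw [exp_nat_mul, exp_log (by positivity)]
  calc M * (1 - p) ^ s
      ≤ N ^ k * exp (-p) ^ s :=
        mul_le_mul hM (pow_le_pow_left₀ (by linarith) (one_sub_le_exp_neg p) s) (by positivity)
          (by positivity)
    _ = exp (k * log N - p * s) := by
        rw [hNk, ← exp_nat_mul, ← exp_add]; ring_nf
    _ < 1 := exp_lt_one_iff.2 (by linarith)

theorem IsStronglySelective.of_forall_card_eq {N k s : ℕ} {S : Fin s → Finset (Fin N)}
    (hkN : k ≤ N) (h : ∀ (Y : Finset (Fin N)) (z : Fin N), #Y = k - 1 → z ∉ Y →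
      ∃ i, z ∈ S i ∧ Disjoint (S i) Y) :
    IsStronglySelective N k S := by
  intro Z _ hZk z hz
  obtain ⟨Y, hZY, hY, hYcard⟩ := exists_subsuperset_card_eq (n := k - 1)
    (erase_subset_erase z (subset_univ Z)) (by rw [card_erase_of_mem hz]; omega) (by simp; omega)
  obtain ⟨i, hzi, hdisj⟩ := h Y z hYcard (fun hzY => by simpa using hY hzY)
  refine ⟨i, eq_singleton_iff_unique_mem.2 ⟨mem_inter.2 ⟨hzi, hz⟩, fun x hx => ?_⟩⟩
  by_contra hxz
  exact disjoint_left.1 hdisj (mem_inter.1 hx).1 (hZY (mem_erase.2 ⟨hxz, (mem_inter.1 hx).2⟩))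

theorem card_filter_notMem_powersetCard_product_le (N : ℕ) {k : ℕ} (hk : 1 ≤ k) :
    #({q ∈ (univ : Finset (Fin N)).powersetCard (k - 1) ×ˢ univ | q.2 ∉ q.1}) ≤ N ^ k := calc
  _ ≤ #((univ : Finset (Fin N)).powersetCard (k - 1) ×ˢ univ) := card_filter_le _ _
  _ = N.choose (k - 1) * N := by simp
  _ ≤ N ^ (k - 1) * N := Nat.mul_le_mul_right _ (Nat.choose_le_pow _ _)
  _ = N ^ k := by rw [← pow_succ, Nat.sub_add_cancel hk]

/-- For every `2 ≤ k ≤ N` there exists an `(N,k)`-strongly-selective family of size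
at most `C·k²·log N` for some absolute constant `C > 0`. -/
theorem exists_strongly_selective_family :
    ∃ C : ℝ, 0 < C ∧ ∀ N k : ℕ, 2 ≤ k → k ≤ N →
      ∃ (s : ℕ) (S : Fin s → Finset (Fin N)), IsStronglySelective N k S ∧
        (s : ℝ) ≤ C * (k : ℝ) ^ 2 * Real.log N := by
  refine ⟨4, by norm_num, fun N k hk hkN => ?_⟩
  have hN : 2 ≤ N := hk.trans hkN
  have : NeZero k := ⟨by omega⟩
  set s := ⌈3 * (k : ℝ) ^ 2 * log N⌉₊
  set C : Finset (Finset (Fin N) × Fin N) :=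
    {q ∈ univ.powersetCard (k - 1) ×ˢ univ | q.2 ∉ q.1}
  set p := (k : ℝ)⁻¹ * (1 - (k : ℝ)⁻¹) ^ (k - 1)
  have hdensity : ∀ q ∈ C,
      p * card (Fin N → Fin k) ≤ #(isolatingColorings (0 : Fin k) q.2 q.1) := by
    rintro ⟨Y, z⟩ hq
    rw [mem_filter, mem_product, mem_powersetCard] at hq
    rw [card_isolatingColorings _ hq.2, hq.1.1.2]
    simp [p]
  have hunion : #C * (1 - p) ^ s < 1 :=
    mul_one_sub_inv_mul_one_sub_inv_pow_pow_lt_one (by omega) hN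
      (by exact_mod_cast card_filter_notMem_powersetCard_product_le N (by omega : 1 ≤ k))
      (Nat.le_ceil _)
  obtain ⟨ω, hω⟩ := exists_forall_exists_mem_of_card_mul_one_sub_pow_lt_one C _ hdensity hunion
  refine ⟨s, fun i => {x | ω i x = 0},
    IsStronglySelective.of_forall_card_eq hkN fun Y z hY hz => ?_, ?_⟩
  · obtain ⟨i, hi⟩ := hω (Y, z) (by simp [C, hY, hz])
    rw [mem_isolatingColorings] at hi
    exact ⟨i, by simpa using hi.1, disjoint_left.2 fun x hx hxY => hi.2 x hxY (by simpa using hx)⟩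
  · have hlog : (1 : ℝ) / 4 < log N := by
      linarith [log_two_gt_d9, log_le_log two_pos (by exact_mod_cast hN : (2 : ℝ) ≤ N)]
    have hk2 : (2 : ℝ) ≤ k := by exact_mod_cast hk
    nlinarith [Nat.ceil_lt_add_one (by positivity : 0 ≤ 3 * (k : ℝ) ^ 2 * log N)]
end
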